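/- Fix a real R ≠ 0, let G x = 1 − (Σ_μ ε μ * (x μ)²)/(4R²), and define the frame fields e ν n x := G x * (if ν = n then 1 else 0), the Christoffel symbols Γ ν μ λ x := (1/(2 R² * G x)) * ( (ε μ * x μ) * (if ν = λ then 1 else 0) + (ε λ * x λ) * (if ν = μ then 1 else 0) − x ν * η μ λ ), the spin connection w k n m x := −(1/(2R²)) * ( (ε n * x n) * η m k − (ε m * x m) * η n k ), and w' μ n m x := (G x)⁻¹ * ε m * (w μ n m x). Then the frame fields are covariantly constant: for every x with G x ≠ 0 and all μ, n, ν : Fin D, ∂_μ (fun y => e ν n y) x + Σ_λ Γ ν μ λ x * e λ n x + Σ_m w' μ n m x * e ν m x = 0. -/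

import Mathlib

/-!
Since `e ν n = G δ_{νn}`, the contractions with `e` collapse the sums over `λ` and `m` to single
terms. The derivative `∂_μ G = -ε_μ x_μ / (2R²)` cancels the first Christoffel term, and, because
`ε² = 1` turns `ε_ν η_{νμ}` into `δ_{νμ}`, the spin-connection term cancels the remaining two.
-/

noncomputable section

def eps (p : ℕ) {D : ℕ} (m : Fin D) : ℝ := if (m : ℕ) < p then -1 else 1

def eta (p : ℕ) {D : ℕ} (m n : Fin D) : ℝ := if m = n then eps p m else 0

section Sign

variable (p : ℕ) {D : ℕ}

lemma eps_mul_self (m : Fin D) : eps p m * eps p m = 1 := by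
  unfold eps; split <;> norm_num

lemma eta_comm (m n : Fin D) : eta p m n = eta p n m := by
  unfold eta; split_ifs with h h' h' <;> simp_all

lemma eps_mul_eta (m n : Fin D) : eps p m * eta p m n = if m = n then 1 else 0 := by
  unfold eta; split_ifs <;> simp [eps_mul_self]

end Sign

lemma hasFDerivAt_sum_mul_sq {ι : Type*} [Fintype ι] (c x : ι → ℝ) :
    HasFDerivAt (fun y : ι → ℝ => ∑ i, c i * y i ^ 2)
      (∑ i, (2 * c i * x i) • ContinuousLinearMap.proj (R := ℝ) (φ := fun _ : ι => ℝ) i) x := by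
  refine HasFDerivAt.fun_sum fun i _ => ?_
  refine (((hasFDerivAt_apply (𝕜 := ℝ) (F' := fun _ : ι => ℝ) i x).pow 2).const_mul
    (c i)).congr_fderiv ?_
  ext v
  simp only [Nat.add_one_sub_one, pow_one, nsmul_eq_mul, Nat.cast_ofNat, smul_apply,
    ContinuousLinearMap.proj_apply, smul_eq_mul]
  ring

lemma fderiv_one_sub_sum_mul_sq_div_apply_single {ι : Type*} [Fintype ι] [DecidableEq ι]
    (c x : ι → ℝ) (a : ℝ) (j : ι) :
    fderiv ℝ (fun y : ι → ℝ => 1 - (∑ i, c i * y i ^ 2) / a) x (Pi.single j 1) =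
      -(2 * c j * x j) / a := by
  have h : HasFDerivAt (fun y : ι → ℝ => 1 - (∑ i, c i * y i ^ 2) / a)
      (-(a⁻¹ • ∑ i, (2 * c i * x i) • ContinuousLinearMap.proj (R := ℝ) (φ := fun _ : ι => ℝ) i))
      x :=
    ((hasFDerivAt_sum_mul_sq c x).mul_const a⁻¹).const_sub 1
  simp only [h.fderiv, neg_apply, smul_apply, sum_apply, ContinuousLinearMap.proj_apply,
    Pi.single_apply, smul_eq_mul, mul_ite, mul_one, mul_zero, Finset.sum_ite_eq',
    Finset.mem_univ, if_true]
  ring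

theorem stmt_11_general (p q : ℕ) (R : ℝ) :
    let D := p + q
    let G : (Fin D → ℝ) → ℝ := fun x => 1 - (∑ μ : Fin D, eps p μ * (x μ) ^ 2) / (4 * R ^ 2)
    let pd : Fin D → ((Fin D → ℝ) → ℝ) → ((Fin D → ℝ) → ℝ) :=
      fun n f x => fderiv ℝ f x (Pi.single n 1)
    let e : Fin D → Fin D → (Fin D → ℝ) → ℝ :=
      fun ν n x => G x * (if ν = n then (1 : ℝ) else 0)
    let Γ : Fin D → Fin D → Fin D → (Fin D → ℝ) → ℝ :=
      fun ν μ lam x => (1 / (2 * R ^ 2 * G x)) *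
        ((eps p μ * x μ) * (if ν = lam then (1 : ℝ) else 0) +
          (eps p lam * x lam) * (if ν = μ then (1 : ℝ) else 0) - x ν * eta p μ lam)
    let w : Fin D → Fin D → Fin D → (Fin D → ℝ) → ℝ :=
      fun k n m x => -(1 / (2 * R ^ 2)) *
        ((eps p n * x n) * eta p m k - (eps p m * x m) * eta p n k)
    let w' : Fin D → Fin D → Fin D → (Fin D → ℝ) → ℝ :=
      fun μ n m x => (G x)⁻¹ * eps p m * w μ n m x
    ∀ x : Fin D → ℝ, G x ≠ 0 → ∀ μ n ν : Fin D,
      pd μ (fun y => e ν n y) x + (∑ lam : Fin D, Γ ν μ lam x * e lam n x) +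
        (∑ m : Fin D, w' μ n m x * e ν m x) = 0 := by
  intro D G pd e Γ w w' x hG μ n ν
  have hpd : pd μ (fun y => e ν n y) x
      = -(eps p μ * x μ * (if ν = n then 1 else 0)) / (2 * R ^ 2) := by
    have hGd : DifferentiableAt ℝ G x := by fun_prop
    simp only [pd, e, fderiv_mul_const hGd, smul_apply, smul_eq_mul, G,
      fderiv_one_sub_sum_mul_sq_div_apply_single]
    ring
  have hΓ : ∑ lam, Γ ν μ lam x * e lam n x = (eps p μ * x μ * (if ν = n then 1 else 0) +
      eps p n * x n * (if ν = μ then 1 else 0) - x ν * eta p n μ) / (2 * R ^ 2) := by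
    simp only [Γ, e, mul_ite, mul_one, mul_zero, Finset.sum_ite_eq', Finset.mem_univ,
      if_true, eta_comm p μ n]
    field_simp
  have hw : ∑ m, w' μ n m x * e ν m x =
      -(eps p n * x n * (if ν = μ then 1 else 0) - x ν * eta p n μ) / (2 * R ^ 2) := by
    have hsign : eps p ν * (eps p n * x n * eta p ν μ - eps p ν * x ν * eta p n μ) =
        eps p n * x n * (if ν = μ then 1 else 0) - x ν * eta p n μ := by
      linear_combination (eps p n * x n) * eps_mul_eta p ν μ - (x ν * eta p n μ) * eps_mul_self p ν
    rw [← hsign]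
    simp only [w', w, e, mul_ite, mul_one, mul_zero, Finset.sum_ite_eq, Finset.mem_univ,
      if_true]
    field_simp
  rw [hpd, hΓ, hw]
  ring

theorem stmt_11 (p q : ℕ) (R : ℝ) (hR : R ≠ 0) :
    let D := p + q
    let G : (Fin D → ℝ) → ℝ := fun x => 1 - (∑ μ : Fin D, eps p μ * (x μ) ^ 2) / (4 * R ^ 2)
    let pd : Fin D → ((Fin D → ℝ) → ℝ) → ((Fin D → ℝ) → ℝ) :=
      fun n f x => fderiv ℝ f x (Pi.single n 1)
    let e : Fin D → Fin D → (Fin D → ℝ) → ℝ :=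
      fun ν n x => G x * (if ν = n then (1 : ℝ) else 0)
    let Γ : Fin D → Fin D → Fin D → (Fin D → ℝ) → ℝ :=
      fun ν μ lam x => (1 / (2 * R ^ 2 * G x)) *
        ((eps p μ * x μ) * (if ν = lam then (1 : ℝ) else 0) +
          (eps p lam * x lam) * (if ν = μ then (1 : ℝ) else 0) - x ν * eta p μ lam)
    let w : Fin D → Fin D → Fin D → (Fin D → ℝ) → ℝ :=
      fun k n m x => -(1 / (2 * R ^ 2)) *
        ((eps p n * x n) * eta p m k - (eps p m * x m) * eta p n k)
    let w' : Fin D → Fin D → Fin D → (Fin D → ℝ) → ℝ :=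
      fun μ n m x => (G x)⁻¹ * eps p m * w μ n m x
    ∀ x : Fin D → ℝ, G x ≠ 0 → ∀ μ n ν : Fin D,
      pd μ (fun y => e ν n y) x + (∑ lam : Fin D, Γ ν μ lam x * e lam n x) +
        (∑ m : Fin D, w' μ n m x * e ν m x) = 0 :=
  stmt_11_general p q R
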